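/- For α ∈ (0,1), the quantum Rényi entropy S_α(ρ) = (1/(1-α)) log Tr(ρ^α) is concave: for any finite collection of density matrices ρ_k on C^N and probability weights p_k, S_α(∑_k p_k ρ_k) ≥ ∑_k p_k S_α(ρ_k). -/

import Mathlib

/-!
For a concave `f`, the diagonal of a Hermitian matrix in any orthonormal basis `U` is an average
of its eigenvalues with doubly stochastic weights `|(W⋆U)ⱼᵢ|²` (`W` an eigenbasis), so
`Tr f(A) ≤ ∑ᵢ f((U⋆AU)ᵢᵢ)`. Taking for `U` an eigenbasis of `σ = ∑ₖ pₖ ρₖ`, the eigenvalues of `σ`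
are the averages `∑ₖ pₖ (U⋆ρₖU)ᵢᵢ`, and Jensen's inequality in `k` gives
`∑ₖ pₖ Tr f(ρₖ) ≤ Tr f(σ)`. With `f = x ^ α` this is concavity of `Tr ρ^α`; as `Tr ρₖ^α ≥ 1`
for density matrices, the concave increasing `log` and the factor `1 / (1 - α) > 0` preserve it.
-/

open Matrix BigOperators
open scoped ComplexOrder

/-- Trace of `ρ^α` (real power), computed via the spectral decomposition. -/
noncomputable def traceRpow {N : ℕ} (ρ : Matrix (Fin N) (Fin N) ℂ) (α : ℝ) : ℝ :=
  if h : ρ.IsHermitian then ∑ i, (h.eigenvalues i) ^ α else 0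

/-- Quantum Rényi entropy `S_α(ρ) = (1/(1-α)) log Tr(ρ^α)`. -/
noncomputable def renyiEntropy {N : ℕ} (ρ : Matrix (Fin N) (Fin N) ℂ) (α : ℝ) : ℝ :=
  (1 / (1 - α)) * Real.log (traceRpow ρ α)

namespace Matrix

variable {n 𝕜 : Type*} [Fintype n] [DecidableEq n] [RCLike 𝕜]

theorem norm_sq_apply_mem_doublyStochastic_of_mem_unitaryGroup {U : Matrix n n 𝕜}
    (hU : U ∈ unitaryGroup n 𝕜) : of (fun i j => ‖U i j‖ ^ 2) ∈ doublyStochastic ℝ n := by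
  rw [mem_doublyStochastic_iff_sum]
  refine ⟨fun i j => sq_nonneg _, fun i => ?_, fun j => ?_⟩
  · have h := congr_fun₂ ((mem_unitaryGroup_iff).mp hU) i i
    simp only [mul_apply, star_apply, one_apply_eq, RCLike.star_def, RCLike.mul_conj] at h
    simpa using (by exact_mod_cast h : ∑ j, ‖U i j‖ ^ 2 = (1 : ℝ))
  · have h := congr_fun₂ ((mem_unitaryGroup_iff').mp hU) j j
    simp only [mul_apply, star_apply, one_apply_eq, RCLike.star_def, RCLike.conj_mul] at h
    simpa using (by exact_mod_cast h : ∑ i, ‖U i j‖ ^ 2 = (1 : ℝ))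

theorem re_star_mul_diagonal_mul_apply_self (C : Matrix n n 𝕜) (d : n → ℝ) (i : n) :
    RCLike.re ((star C * diagonal (RCLike.ofReal ∘ d) * C : Matrix n n 𝕜) i i) =
      ∑ j, ‖C j i‖ ^ 2 * d j := by
  rw [mul_apply, map_sum]
  refine Finset.sum_congr rfl fun j _ => ?_
  rw [mul_diagonal, star_apply, RCLike.star_def, Function.comp_apply, mul_right_comm,
    RCLike.conj_mul]
  norm_cast

namespace IsHermitian

variable {A : Matrix n n 𝕜} (hA : A.IsHermitian)

theorem re_star_mul_mul_apply_self (V : Matrix n n 𝕜) (i : n) :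
    RCLike.re ((star V * A * V) i i) =
      ∑ j, ‖(star (hA.eigenvectorUnitary : Matrix n n 𝕜) * V) j i‖ ^ 2 * hA.eigenvalues j := by
  rw [← re_star_mul_diagonal_mul_apply_self]
  conv_lhs => rw [hA.spectral_theorem, Unitary.conjStarAlgAut_apply]
  simp only [star_mul, star_star, Matrix.mul_assoc]

theorem eigenvalues_eq_re_star_mul_mul_apply_self (i : n) :
    hA.eigenvalues i = RCLike.re
      ((star (hA.eigenvectorUnitary : Matrix n n 𝕜) * A * hA.eigenvectorUnitary) i i) := by
  have h := hA.conjStarAlgAut_star_eigenvectorUnitary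
  rw [Unitary.conjStarAlgAut_star_apply] at h
  simp [h]

theorem re_star_mul_mul_apply_self_mem {s : Set ℝ} (hs : Convex ℝ s)
    (hev : ∀ j, hA.eigenvalues j ∈ s) {U : Matrix n n 𝕜} (hU : U ∈ unitaryGroup n 𝕜) (i : n) :
    RCLike.re ((star U * A * U) i i) ∈ s := by
  have hM := norm_sq_apply_mem_doublyStochastic_of_mem_unitaryGroup
    (mul_mem (star hA.eigenvectorUnitary).2 hU)
  rw [hA.re_star_mul_mul_apply_self]
  exact hs.sum_mem (fun j _ => nonneg_of_mem_doublyStochastic hM)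
    (by simpa using sum_col_of_mem_doublyStochastic hM i) fun j _ => hev j

theorem sum_map_eigenvalues_le_sum_map_re_diag {s : Set ℝ} {f : ℝ → ℝ} (hf : ConcaveOn ℝ s f)
    (hev : ∀ j, hA.eigenvalues j ∈ s) {U : Matrix n n 𝕜} (hU : U ∈ unitaryGroup n 𝕜) :
    ∑ j, f (hA.eigenvalues j) ≤ ∑ i, f (RCLike.re ((star U * A * U) i i)) := by
  set M := of fun j i => ‖(star (hA.eigenvectorUnitary : Matrix n n 𝕜) * U) j i‖ ^ 2
  have hM : M ∈ doublyStochastic ℝ n := norm_sq_apply_mem_doublyStochastic_of_mem_unitaryGroup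
    (mul_mem (star hA.eigenvectorUnitary).2 hU)
  calc ∑ j, f (hA.eigenvalues j)
      = ∑ j, (∑ i, M j i) * f (hA.eigenvalues j) := by
        simp only [sum_row_of_mem_doublyStochastic hM, one_mul]
    _ = ∑ i, ∑ j, M j i * f (hA.eigenvalues j) := by
        simp only [Finset.sum_mul]
        exact Finset.sum_comm
    _ ≤ ∑ i, f (∑ j, M j i * hA.eigenvalues j) := Finset.sum_le_sum fun i _ =>
        hf.le_map_sum (fun j _ => nonneg_of_mem_doublyStochastic hM)
          (sum_col_of_mem_doublyStochastic hM i) fun j _ => hev j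
    _ = ∑ i, f (RCLike.re ((star U * A * U) i i)) := by
        simp only [hA.re_star_mul_mul_apply_self, M, of_apply]

end IsHermitian

theorem sum_mul_sum_map_eigenvalues_le {ι : Type*} [Fintype ι] {ρ : ι → Matrix n n 𝕜}
    (hρ : ∀ k, (ρ k).IsHermitian) {p : ι → ℝ} (hp : ∀ k, 0 ≤ p k) (hps : ∑ k, p k = 1)
    (hσ : (∑ k, (p k : 𝕜) • ρ k).IsHermitian) {s : Set ℝ} {f : ℝ → ℝ} (hf : ConcaveOn ℝ s f)
    (hev : ∀ k j, (hρ k).eigenvalues j ∈ s) :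
    ∑ k, p k * ∑ j, f ((hρ k).eigenvalues j) ≤ ∑ i, f (hσ.eigenvalues i) := by
  set W : Matrix n n 𝕜 := ↑hσ.eigenvectorUnitary
  have hW : W ∈ unitaryGroup n 𝕜 := hσ.eigenvectorUnitary.2
  set q : ι → n → ℝ := fun k i => RCLike.re ((star W * ρ k * W) i i)
  have hq : ∀ i, hσ.eigenvalues i = ∑ k, p k * q k i := fun i => by
    rw [hσ.eigenvalues_eq_re_star_mul_mul_apply_self]
    simp [q, W, Matrix.mul_sum, Matrix.sum_mul, sum_apply, RCLike.smul_re]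
  calc ∑ k, p k * ∑ j, f ((hρ k).eigenvalues j)
      ≤ ∑ k, p k * ∑ i, f (q k i) := Finset.sum_le_sum fun k _ =>
        mul_le_mul_of_nonneg_left
          ((hρ k).sum_map_eigenvalues_le_sum_map_re_diag hf (hev k) hW) (hp k)
    _ = ∑ i, ∑ k, p k * f (q k i) := by
        simp only [Finset.mul_sum]
        exact Finset.sum_comm
    _ ≤ ∑ i, f (∑ k, p k * q k i) := Finset.sum_le_sum fun i _ =>
        hf.le_map_sum (fun k _ => hp k) hps fun k _ =>
          (hρ k).re_star_mul_mul_apply_self_mem hf.1 (hev k) hW i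
    _ = ∑ i, f (hσ.eigenvalues i) := by simp only [hq]

end Matrix

theorem traceRpow_of_isHermitian {N : ℕ} {ρ : Matrix (Fin N) (Fin N) ℂ} (h : ρ.IsHermitian)
    (α : ℝ) : traceRpow ρ α = ∑ i, h.eigenvalues i ^ α :=
  dif_pos h

theorem one_le_traceRpow {N : ℕ} {ρ : Matrix (Fin N) (Fin N) ℂ} (hρ : ρ.PosSemidef)
    (htr : ρ.trace = 1) {α : ℝ} (hα : α ≤ 1) : 1 ≤ traceRpow ρ α := by
  have hsum : ∑ i, hρ.1.eigenvalues i = 1 := by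
    have h := hρ.1.trace_eq_sum_eigenvalues
    rw [htr, ← RCLike.ofReal_sum, ← RCLike.ofReal_one, RCLike.ofReal_inj] at h
    exact h.symm
  rw [traceRpow_of_isHermitian hρ.1, ← hsum]
  refine Finset.sum_le_sum fun i _ => Real.self_le_rpow_of_le_one (hρ.eigenvalues_nonneg i) ?_ hα
  exact hsum ▸ Finset.single_le_sum (fun j _ => hρ.eigenvalues_nonneg j) (Finset.mem_univ i)

theorem sum_mul_traceRpow_le_traceRpow_sum {N m : ℕ} {α : ℝ} (hα0 : 0 ≤ α) (hα1 : α ≤ 1)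
    {ρ : Fin m → Matrix (Fin N) (Fin N) ℂ} (hρ : ∀ k, (ρ k).PosSemidef) {p : Fin m → ℝ}
    (hp : ∀ k, 0 ≤ p k) (hps : ∑ k, p k = 1) :
    ∑ k, p k * traceRpow (ρ k) α ≤ traceRpow (∑ k, (p k : ℂ) • ρ k) α := by
  have hσ : (∑ k, (p k : ℂ) • ρ k).IsHermitian :=
    isSelfAdjoint_sum _ fun k _ => (hρ k).1.smul (Complex.conj_ofReal (p k))
  simp only [traceRpow_of_isHermitian (hρ _).1, traceRpow_of_isHermitian hσ]
  exact sum_mul_sum_map_eigenvalues_le (fun k => (hρ k).1) hp hps hσ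
    (Real.concaveOn_rpow hα0 hα1) fun k j => (hρ k).eigenvalues_nonneg j

/-- For `α ∈ (0,1)` the quantum Rényi entropy is concave over density matrices. -/
theorem renyiEntropy_concave {N m : ℕ} (α : ℝ) (hα : α ∈ Set.Ioo (0 : ℝ) 1)
    (ρ : Fin m → Matrix (Fin N) (Fin N) ℂ)
    (hρ : ∀ k, (ρ k).PosSemidef) (hTr : ∀ k, (ρ k).trace = 1)
    (p : Fin m → ℝ) (hp : ∀ k, 0 ≤ p k) (hps : ∑ k, p k = 1) :
    ∑ k, p k * renyiEntropy (ρ k) α ≤ renyiEntropy (∑ k, (p k : ℂ) • ρ k) α := by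
  obtain ⟨hα0, hα1⟩ := hα
  have hT : ∀ k, 1 ≤ traceRpow (ρ k) α := fun k => one_le_traceRpow (hρ k) (hTr k) hα1.le
  have hmix : 1 ≤ ∑ k, p k * traceRpow (ρ k) α :=
    hps ▸ Finset.sum_le_sum fun k _ => le_mul_of_one_le_right (hp k) (hT k)
  have hlog : ∑ k, p k * Real.log (traceRpow (ρ k) α) ≤
      Real.log (traceRpow (∑ k, (p k : ℂ) • ρ k) α) :=
    calc ∑ k, p k * Real.log (traceRpow (ρ k) α)
        ≤ Real.log (∑ k, p k * traceRpow (ρ k) α) :=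
          strictConcaveOn_log_Ioi.concaveOn.le_map_sum (fun k _ => hp k) hps
            fun k _ => one_pos.trans_le (hT k)
      _ ≤ Real.log (traceRpow (∑ k, (p k : ℂ) • ρ k) α) :=
          Real.log_le_log (one_pos.trans_le hmix)
            (sum_mul_traceRpow_le_traceRpow_sum hα0.le hα1.le hρ hp hps)
  have hc : 0 ≤ 1 / (1 - α) := one_div_nonneg.mpr (sub_nonneg.mpr hα1.le)
  simp only [renyiEntropy, mul_left_comm _ (1 / (1 - α)), ← Finset.mul_sum]
  exact mul_le_mul_of_nonneg_left hlog hc
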